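/- arXiv:2508.17950 — 6 statements merged into one kernel-verified Lean document; each statement's English description precedes it below -/
import Mathlib

section
/- Let q = ln 2 / ln(3/2) and define x(t) = (t^q − t^{q+1}) / (1 − t^q) for real t > 0, t ≠ 1. Then x is strictly increasing on (0,1) and on (1,∞); more precisely, its derivative x′(t) = t^{q−1}(t^{q+1} − (q+1)t + q)/(t^q − 1)^2 is positive for all t > 0 with t ≠ 1. -/
/-!
Writing `x(t) = (t^q - t^(q+1)) / (1 - t^q)`, the quotient rule gives
`x'(t) = t^(q-1) (t^(q+1) - (q+1) t + q) / (t^q - 1)^2`, and the middle factor is positive for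
`t ≠ 1` by the strict Bernoulli inequality `t^(q+1) > 1 + (q+1)(t-1)`, valid since
`q + 1 > 1`.
-/

open Real Set

lemma strictMonoOn_of_hasDerivAt_pos {s : Set ℝ} (hs : Convex ℝ s) (hso : IsOpen s)
    {f f' : ℝ → ℝ} (hf : ∀ x ∈ s, HasDerivAt f (f' x) x) (hf' : ∀ x ∈ s, 0 < f' x) :
    StrictMonoOn f s := by
  refine strictMonoOn_of_hasDerivWithinAt_pos (f' := f') hs
    (fun x hx => (hf x hx).continuousAt.continuousWithinAt) ?_ ?_ <;> rw [hso.interior_eq]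
  exacts [fun x hx => (hf x hx).hasDerivWithinAt, hf']

namespace Real

lemma rpow_ne_one_of_ne_one {t q : ℝ} (ht : 0 < t) (ht1 : t ≠ 1) (hq : q ≠ 0) :
    t ^ q ≠ 1 := fun h =>
  ht1 ((rpow_left_inj ht.le zero_le_one hq).mp (h.trans (one_rpow q).symm))

lemma rpow_add_one_sub_mul_add_pos {t q : ℝ} (ht : 0 < t) (ht1 : t ≠ 1) (hq : 0 < q) :
    0 < t ^ (q + 1) - (q + 1) * t + q := by
  have bernoulli := one_add_mul_self_lt_rpow_one_add (s := t - 1) (by linarith)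
    (sub_ne_zero.mpr ht1) (p := q + 1) (by linarith)
  rw [add_sub_cancel] at bernoulli
  linarith

lemma hasDerivAt_rpow_sub_rpow_add_one_div {t q : ℝ} (ht : 0 < t) (htq : t ^ q ≠ 1) :
    HasDerivAt (fun s : ℝ => (s ^ q - s ^ (q + 1)) / (1 - s ^ q))
      (t ^ (q - 1) * (t ^ (q + 1) - (q + 1) * t + q) / (t ^ q - 1) ^ 2) t := by
  have hpow : HasDerivAt (fun s : ℝ => s ^ q) (q * t ^ (q - 1)) t :=
    hasDerivAt_rpow_const (Or.inl ht.ne')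
  have hpow_succ : HasDerivAt (fun s : ℝ => s ^ (q + 1)) ((q + 1) * t ^ q) t := by
    simpa using hasDerivAt_rpow_const (p := q + 1) (Or.inl ht.ne')
  have hden : (1 : ℝ) - t ^ q ≠ 0 := sub_ne_zero.mpr htq.symm
  refine ((hpow.sub hpow_succ).div ((hasDerivAt_const t 1).sub hpow) hden).congr_deriv ?_
  simp only [Pi.sub_apply]
  have hq : t ^ q = t ^ (q - 1) * t := by rw [← rpow_add_one ht.ne', sub_add_cancel]
  have hq_succ : t ^ (q + 1) = t ^ (q - 1) * t * t := by rw [← hq, rpow_add_one ht.ne']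
  rw [div_eq_div_iff (pow_ne_zero 2 hden) (pow_ne_zero 2 (sub_ne_zero.mpr htq)), hq_succ, hq]
  ring

lemma rpow_sub_rpow_add_one_div_deriv_pos {t q : ℝ} (ht : 0 < t) (ht1 : t ≠ 1) (hq : 0 < q) :
    0 < t ^ (q - 1) * (t ^ (q + 1) - (q + 1) * t + q) / (t ^ q - 1) ^ 2 := by
  have hmid := rpow_add_one_sub_mul_add_pos ht ht1 hq
  have hden : t ^ q - 1 ≠ 0 := sub_ne_zero.mpr (rpow_ne_one_of_ne_one ht ht1 hq.ne')
  positivity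

end Real

theorem stmt5 (q : ℝ) (hq : q = Real.log 2 / Real.log (3 / 2)) :
    StrictMonoOn (fun t : ℝ => (t ^ q - t ^ (q + 1)) / (1 - t ^ q)) (Set.Ioo 0 1) ∧
    StrictMonoOn (fun t : ℝ => (t ^ q - t ^ (q + 1)) / (1 - t ^ q)) (Set.Ioi 1) ∧
    ∀ t : ℝ, 0 < t → t ≠ 1 →
      HasDerivAt (fun s : ℝ => (s ^ q - s ^ (q + 1)) / (1 - s ^ q))
        (t ^ (q - 1) * (t ^ (q + 1) - (q + 1) * t + q) / (t ^ q - 1) ^ 2) t ∧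
      0 < t ^ (q - 1) * (t ^ (q + 1) - (q + 1) * t + q) / (t ^ q - 1) ^ 2 := by
  have hq_pos : 0 < q := hq ▸ div_pos (log_pos (by norm_num)) (log_pos (by norm_num))
  have hderiv {t : ℝ} (ht : 0 < t) (ht1 : t ≠ 1) :=
    hasDerivAt_rpow_sub_rpow_add_one_div ht (rpow_ne_one_of_ne_one ht ht1 hq_pos.ne')
  have hpos {t : ℝ} (ht : 0 < t) (ht1 : t ≠ 1) :=
    rpow_sub_rpow_add_one_div_deriv_pos ht ht1 hq_pos
  refine ⟨?_, ?_, fun t ht ht1 => ⟨hderiv ht ht1, hpos ht ht1⟩⟩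
  · exact strictMonoOn_of_hasDerivAt_pos (convex_Ioo 0 1) isOpen_Ioo
      (fun t ht => hderiv ht.1 ht.2.ne) (fun t ht => hpos ht.1 ht.2.ne)
  · exact strictMonoOn_of_hasDerivAt_pos (convex_Ioi 1) isOpen_Ioi
      (fun t ht => hderiv (one_pos.trans ht) ht.ne') (fun t ht => hpos (one_pos.trans ht) ht.ne')
end

section
/- Fix a real q > 1. For every real y ≥ 1, there is a unique t ∈ (y, y+1) with t^q (y + 1 − t) = y, and this t satisfies y + 1 − y^{1−q} ≤ t < y + 1. -/
/-!
Taking logarithms, `t ^ q * (y + 1 - t) = y` becomes `h t = log y` with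
`h t = q log t + log (y + 1 - t)` strictly concave on `(0, y + 1)`. Since `h y = q log y ≥ log y`,
strict concavity leaves room for at most one solution to the right of `y`; one exists by the
intermediate value theorem because `f = t ^ q * (y + 1 - t)` vanishes at `y + 1` and exceeds `y`
somewhere in `[y, y + 1)`. The lower bound follows from `y ^ q ≤ t ^ q` in the equation.
-/

open Real Set

theorem StrictConcaveOn.eq_of_apply_eq_of_le_apply {𝕜 β : Type*} [Field 𝕜] [LinearOrder 𝕜]
    [IsStrictOrderedRing 𝕜] [AddCommMonoid β] [LinearOrder β] [IsOrderedAddMonoid β]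
    [Module 𝕜 β] [PosSMulStrictMono 𝕜 β] {s : Set 𝕜} {f : 𝕜 → β}
    (hf : StrictConcaveOn 𝕜 s f) {a t₁ t₂ : 𝕜} {c : β} (ha : a ∈ s) (hc : c ≤ f a)
    (h₁ : t₁ ∈ s) (h₂ : t₂ ∈ s) (hat₁ : a < t₁) (hat₂ : a < t₂) (hft₁ : f t₁ = c)
    (hft₂ : f t₂ = c) : t₁ = t₂ := by
  wlog h : t₁ < t₂ generalizing t₁ t₂
  · rcases (not_lt.1 h).lt_or_eq with h' | h'
    · exact (this h₂ h₁ hat₂ hat₁ hft₂ hft₁ h').symm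
    · exact h'.symm
  have hmem : t₁ ∈ openSegment 𝕜 a t₂ := by rw [openSegment_eq_Ioo hat₂]; exact ⟨hat₁, h⟩
  have hlt := hf.lt_on_openSegment ha h₂ hat₂.ne hmem
  rw [hft₁, hft₂, min_eq_right hc] at hlt
  exact (lt_irrefl c hlt).elim

theorem strictConcaveOn_log_sub (b : ℝ) : StrictConcaveOn ℝ (Iio b) fun t ↦ log (b - t) := by
  refine ⟨convex_Iio b, fun x hx y hy hxy u v hu hv huv ↦ ?_⟩
  have key := strictConcaveOn_log_Ioi.2 (sub_pos.2 hx : 0 < b - x) (sub_pos.2 hy : 0 < b - y)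
    (fun h ↦ hxy (by linarith [h])) hu hv huv
  convert key using 2
  simp only [smul_eq_mul]
  linear_combination b * huv.symm

theorem strictConcaveOn_log_rpow_mul_sub {q : ℝ} (hq : 0 ≤ q) (b : ℝ) :
    StrictConcaveOn ℝ (Ioo 0 b) fun t ↦ log (t ^ q * (b - t)) := by
  refine (((strictConcaveOn_log_Ioi.concaveOn.smul hq).subset Ioo_subset_Ioi_self
    (convex_Ioo 0 b)).add_strictConcaveOn
    ((strictConcaveOn_log_sub b).subset Ioo_subset_Iio_self (convex_Ioo 0 b))).congr ?_
  intro t ht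
  simp only [Pi.add_apply, smul_eq_mul]
  rw [log_mul (rpow_pos_of_pos ht.1 q).ne' (sub_pos.2 ht.2).ne', log_rpow ht.1]

theorem exists_lt_rpow_mul_sub {q y : ℝ} (hq : 1 < q) (hy : 1 ≤ y) :
    ∃ s, y ≤ s ∧ s < y + 1 ∧ y < s ^ q * (y + 1 - s) := by
  rcases hy.lt_or_eq with hy | rfl
  · exact ⟨y, le_rfl, by linarith, by simpa using self_lt_rpow_of_one_lt hy hq⟩
  · -- Here `f 1 = 1` only ties; Bernoulli at `1 + ε` gives `f (1 + ε) ≥ (q + 1) ^ 2 / (4 * q) > 1`.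
    set ε := (q - 1) / (2 * q)
    have hq0 : 0 < q := by linarith
    have hε : 0 < ε := by positivity
    have hε1 : ε < 1 := by rw [div_lt_one (by positivity)]; linarith
    have bernoulli : 1 + q * ε ≤ (1 + ε) ^ q :=
      one_add_mul_self_le_rpow_one_add (by linarith) hq.le
    refine ⟨1 + ε, by linarith, by linarith, ?_⟩
    have : 1 < (1 + q * ε) * (1 - ε) := by
      have hqε : q * ε = (q - 1) / 2 := by simp only [ε]; field_simp
      nlinarith [mul_pos hε (sub_pos.2 hq)]
    calc (1 : ℝ) < (1 + q * ε) * (1 - ε) := this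
      _ ≤ (1 + ε) ^ q * (1 + 1 - (1 + ε)) := by
        rw [show (1 : ℝ) + 1 - (1 + ε) = 1 - ε by ring]
        gcongr

theorem exists_rpow_mul_sub_eq {q y : ℝ} (hq : 1 < q) (hy : 1 ≤ y) :
    ∃ t, y < t ∧ t < y + 1 ∧ t ^ q * (y + 1 - t) = y := by
  obtain ⟨s, hys, hs, hfs⟩ := exists_lt_rpow_mul_sub hq hy
  have hcont : ContinuousOn (fun t : ℝ ↦ t ^ q * (y + 1 - t)) (Icc s (y + 1)) :=
    ((continuous_rpow_const (by linarith)).mul (continuous_sub_left (y + 1))).continuousOn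
  obtain ⟨t, ⟨hst, ht⟩, hft⟩ :=
    intermediate_value_Ioo' hs.le hcont ⟨by simp only [sub_self, mul_zero]; linarith, hfs⟩
  exact ⟨t, hys.trans_lt hst, ht, hft⟩

theorem add_one_sub_rpow_one_sub_le {q y t : ℝ} (hq : 0 ≤ q) (hy : 0 < y) (hyt : y ≤ t)
    (ht : t ≤ y + 1) (h : t ^ q * (y + 1 - t) = y) : y + 1 - y ^ (1 - q) ≤ t := by
  have hyq : 0 < y ^ q := rpow_pos_of_pos hy q
  have hle : y ^ q * (y + 1 - t) ≤ y := calc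
    y ^ q * (y + 1 - t) ≤ t ^ q * (y + 1 - t) := by gcongr
    _ = y := h
  have : y + 1 - t ≤ y ^ (1 - q) := by
    rw [rpow_sub hy, rpow_one, le_div_iff₀ hyq, mul_comm]
    exact hle
  linarith

theorem stmt9 (q y : ℝ) (hq : 1 < q) (hy : 1 ≤ y) :
    (∃! t : ℝ, y < t ∧ t < y + 1 ∧ t ^ q * (y + 1 - t) = y) ∧
    ∀ t : ℝ, y < t → t < y + 1 → t ^ q * (y + 1 - t) = y →
      y + 1 - y ^ (1 - q) ≤ t := by
  have hy0 : 0 < y := by linarith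
  have hlog := strictConcaveOn_log_rpow_mul_sub (q := q) (by linarith) (y + 1)
  have hlog_y : log y ≤ log (y ^ q * (y + 1 - y)) := by
    rw [add_sub_cancel_left, mul_one, log_rpow hy0]
    nlinarith [log_nonneg hy]
  obtain ⟨t₀, hyt₀, ht₀, hft₀⟩ := exists_rpow_mul_sub_eq hq hy
  refine ⟨⟨t₀, ⟨hyt₀, ht₀, hft₀⟩, fun t ⟨hyt, ht, hft⟩ ↦ ?_⟩,
    fun t hyt ht hft ↦ add_one_sub_rpow_one_sub_le (by linarith) hy0 hyt.le ht.le hft⟩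
  exact hlog.eq_of_apply_eq_of_le_apply ⟨hy0, by linarith⟩ hlog_y ⟨by linarith, ht⟩
    ⟨by linarith, ht₀⟩ hyt hyt₀ (by rw [hft]) (by rw [hft₀])
end

section
/- For every q ∈ [1,2] and all reals a, b ≥ 0, (a + b)^q ≤ a^q + q·a^{q−1}·b + b^q. -/
open Set

/- For fixed `a ≥ 0`, the defect `q a^(q-1) x + x^q - (a + x)^q` vanishes at `x = 0` and has derivative
`q (a^(q-1) + x^(q-1) - (a + x)^(q-1)) ≥ 0`, by subadditivity of `t ↦ t^(q-1)` for `0 ≤ q - 1 ≤ 1`. -/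

lemma monotoneOn_mul_add_rpow_sub_rpow_add {a q : ℝ} (ha : 0 ≤ a) (hq₁ : 1 ≤ q) (hq₂ : q ≤ 2) :
    MonotoneOn (fun x => q * a ^ (q - 1) * x + x ^ q - (a + x) ^ q) (Ici 0) := by
  have hderiv (x : ℝ) : HasDerivAt (fun x => q * a ^ (q - 1) * x + x ^ q - (a + x) ^ q)
      (q * a ^ (q - 1) + q * x ^ (q - 1) - q * (a + x) ^ (q - 1)) x :=
    (((hasDerivAt_id x).const_mul _).add (Real.hasDerivAt_rpow_const (Or.inr hq₁))).sub
      ((Real.hasDerivAt_rpow_const (Or.inr hq₁)).comp_const_add a x) |>.congr_deriv (by simp)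
  refine monotoneOn_of_hasDerivWithinAt_nonneg (convex_Ici 0)
    (fun x _ => (hderiv x).continuousAt.continuousWithinAt)
    (fun x _ => (hderiv x).hasDerivWithinAt) fun x hx => ?_
  rw [interior_Ici] at hx
  have hsubadd : (a + x) ^ (q - 1) ≤ a ^ (q - 1) + x ^ (q - 1) :=
    Real.rpow_add_le_add_rpow ha hx.le (by linarith) (by linarith)
  linarith [mul_le_mul_of_nonneg_left hsubadd (by linarith : (0 : ℝ) ≤ q)]

theorem stmt10 (q a b : ℝ) (hq : q ∈ Set.Icc (1 : ℝ) 2) (ha : 0 ≤ a) (hb : 0 ≤ b) :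
    (a + b) ^ q ≤ a ^ q + q * a ^ (q - 1) * b + b ^ q := by
  have hmono := monotoneOn_mul_add_rpow_sub_rpow_add ha hq.1 hq.2 self_mem_Ici hb hb
  simp only [mul_zero, add_zero, Real.zero_rpow (by linarith [hq.1] : q ≠ 0)] at hmono
  linarith
end

section
/- For every q ∈ [1,2] and every real t ≥ 0, (1 + t)^q ≤ 1 + q·t + t^q. -/
/-!
Let `g x = 1 + q x + x ^ q - (1 + x) ^ q`, so that `g 0 = 0`. Its derivative
`q (1 + x ^ (q - 1) - (1 + x) ^ (q - 1))` is nonnegative for `x ≥ 0`, because `x ↦ x ^ (q - 1)` is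
subadditive on `[0, ∞)` when `0 ≤ q - 1 ≤ 1`. Hence `g` is monotone on `[0, ∞)` and `g t ≥ 0`.
-/

open Real Set

lemma hasDerivAt_one_add_mul_add_rpow_sub_one_add_rpow {q : ℝ} (hq : 1 ≤ q) (x : ℝ) :
    HasDerivAt (fun x => 1 + q * x + x ^ q - (1 + x) ^ q)
      (q * (1 + x ^ (q - 1) - (1 + x) ^ (q - 1))) x := by
  have hlin : HasDerivAt (fun x => 1 + q * x) q x := by
    simpa using ((hasDerivAt_id x).const_mul q).const_add 1
  have hpow : HasDerivAt (fun x => x ^ q) (q * x ^ (q - 1)) x :=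
    hasDerivAt_rpow_const (Or.inr hq)
  have hshift : HasDerivAt (fun x => (1 + x) ^ q) (q * (1 + x) ^ (q - 1)) x := by
    simpa using ((hasDerivAt_id x).const_add 1).rpow_const (p := q) (Or.inr hq)
  exact ((hlin.add hpow).sub hshift).congr_deriv (by ring)

lemma monotoneOn_one_add_mul_add_rpow_sub_one_add_rpow {q : ℝ} (hq : q ∈ Icc (1 : ℝ) 2) :
    MonotoneOn (fun x : ℝ => 1 + q * x + x ^ q - (1 + x) ^ q) (Ici 0) := by
  have hderiv := hasDerivAt_one_add_mul_add_rpow_sub_one_add_rpow hq.1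
  refine monotoneOn_of_hasDerivWithinAt_nonneg (convex_Ici 0)
    (fun x _ => (hderiv x).continuousAt.continuousWithinAt)
    (fun x _ => (hderiv x).hasDerivWithinAt) fun x hx => ?_
  rw [interior_Ici, mem_Ioi] at hx
  have hsubadd : (1 + x) ^ (q - 1) ≤ 1 ^ (q - 1) + x ^ (q - 1) :=
    rpow_add_le_add_rpow zero_le_one hx.le (by linarith [hq.1]) (by linarith [hq.2])
  rw [one_rpow] at hsubadd
  exact mul_nonneg (by linarith [hq.1]) (by linarith)

theorem stmt11 (q t : ℝ) (hq : q ∈ Set.Icc (1 : ℝ) 2) (ht : 0 ≤ t) :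
    (1 + t) ^ q ≤ 1 + q * t + t ^ q := by
  have h := monotoneOn_one_add_mul_add_rpow_sub_one_add_rpow hq self_mem_Ici ht ht
  simp only [mul_zero, add_zero, zero_rpow (by linarith [hq.1] : q ≠ 0), one_rpow,
    sub_self] at h
  linarith
end

section
/- Let q = ln 2 / ln(3/2) and for an integer m ≥ 2 let δ = m^{1−q}. Then (m + 1 − δ)^q · δ < m + q. -/
/-!
Put `δ = m ^ (1 - q)` and `x = (1 - δ) / m`, so that `m + 1 - δ = m (1 + x)` and `m ^ q δ = m`.
The left-hand side is then `m (1 + x) ^ q`, and Bernoulli's inequality for the exponent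
`q - 1 ∈ [0, 1]` bounds it by `m (1 + (q - 1) x) (1 + x) = m + q (1 - δ) + (q - 1) x (1 - δ)`.
Since `δ ≥ 1 / m`, the last term is at most `(q - 1) δ < q δ`.
-/

open Real

lemma log_two_div_log_three_halves_mem_Ioo : log 2 / log (3 / 2) ∈ Set.Ioo (1 : ℝ) 2 := by
  have hlog : 0 < log (3 / 2) := log_pos (by norm_num)
  constructor
  · rw [lt_div_iff₀ hlog, one_mul]
    exact log_lt_log (by norm_num) (by norm_num)
  · rw [div_lt_iff₀ hlog, ← log_rpow (by norm_num)]
    exact log_lt_log (by norm_num) (by norm_num)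

lemma one_add_rpow_le_mul_one_add {x q : ℝ} (hx : -1 ≤ x) (hq1 : 1 ≤ q) (hq2 : q ≤ 2) :
    (1 + x) ^ q ≤ (1 + (q - 1) * x) * (1 + x) := by
  have h1x : 0 ≤ 1 + x := by linarith
  calc (1 + x) ^ q = (1 + x) ^ (q - 1) * (1 + x) := by
        rw [← rpow_add_one' h1x (by linarith), sub_add_cancel]
    _ ≤ (1 + (q - 1) * x) * (1 + x) := by
        gcongr
        exact rpow_one_add_le_one_add_mul_self hx (by linarith) (by linarith)

lemma add_one_sub_rpow_mul_rpow_one_sub_lt {m q : ℝ} (hm : 1 ≤ m) (hq1 : 1 ≤ q) (hq2 : q ≤ 2) :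
    (m + 1 - m ^ (1 - q)) ^ q * m ^ (1 - q) < m + q := by
  have hm0 : 0 < m := by linarith
  set δ := m ^ (1 - q) with hδ
  have hδ0 : 0 < δ := rpow_pos_of_pos hm0 _
  have hδ1 : δ ≤ 1 := rpow_le_one_of_one_le_of_nonpos hm (by linarith)
  have hmδ : 1 ≤ m * δ := by
    have : m ^ (-1 : ℝ) ≤ δ := rpow_le_rpow_of_exponent_le hm (by linarith)
    rwa [rpow_neg_one, inv_le_iff_one_le_mul₀' hm0] at this
  have hmqδ : m ^ q * δ = m := by
    rw [hδ, ← rpow_add hm0, add_sub_cancel, rpow_one]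
  set x := (1 - δ) / m
  have hxm : x * m = 1 - δ := div_mul_cancel₀ _ hm0.ne'
  have hx0 : 0 ≤ x := div_nonneg (by linarith) hm0.le
  have hxδ : x * (1 - δ) ≤ δ := by nlinarith
  calc (m + 1 - δ) ^ q * δ = m ^ q * δ * (1 + x) ^ q := by
        rw [show m + 1 - δ = m * (1 + x) by linear_combination -hxm,
          mul_rpow hm0.le (by linarith)]
        ring
    _ ≤ m * ((1 + (q - 1) * x) * (1 + x)) := by
        rw [hmqδ]
        gcongr
        exact one_add_rpow_le_mul_one_add (by linarith) hq1 hq2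
    _ = m + q * (1 - δ) + (q - 1) * (x * (1 - δ)) := by
        rw [← hxm]; ring
    _ < m + q := by nlinarith

theorem stmt12 (q : ℝ) (hq : q = Real.log 2 / Real.log (3 / 2)) (m : ℕ) (hm : 2 ≤ m) :
    ((m : ℝ) + 1 - (m : ℝ) ^ (1 - q)) ^ q * (m : ℝ) ^ (1 - q) < (m : ℝ) + q := by
  obtain ⟨hq1, hq2⟩ := hq ▸ log_two_div_log_three_halves_mem_Ioo
  have hm1 : (1 : ℝ) ≤ m := by exact_mod_cast one_le_two.trans hm
  exact add_one_sub_rpow_mul_rpow_one_sub_lt hm1 hq1.le hq2.le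
end

section
/- There is no integer i ≥ 3 such that 3^i = (2^i − 1)(m + 1) for some integer m with m = ⌊(3/2)^i⌋. -/
/-! The equation makes `2 ^ i - 1` a divisor of `3 ^ i`, hence a power of `3`. But for `i ≥ 3`
we have `2 ^ i - 1 ≡ 7 [MOD 8]`, while powers of `3` are `1` or `3` modulo `8`. -/

lemma Nat.three_pow_mod_eight (k : ℕ) : 3 ^ k % 8 = 1 ∨ 3 ^ k % 8 = 3 := by
  induction k with
  | zero => exact Or.inl rfl
  | succ k ih =>
    rw [Nat.pow_succ, Nat.mul_mod]
    rcases ih with h | h <;> rw [h] <;> decide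

lemma Nat.two_pow_sub_one_ne_three_pow {i : ℕ} (hi : 3 ≤ i) (k : ℕ) : 2 ^ i - 1 ≠ 3 ^ k := by
  have h8 : 8 ∣ 2 ^ i := by simpa using pow_dvd_pow (2 : ℕ) hi
  have hpos : 0 < 2 ^ i := by positivity
  have := Nat.three_pow_mod_eight k
  omega

lemma Nat.not_two_pow_sub_one_dvd_three_pow {i : ℕ} (hi : 3 ≤ i) (n : ℕ) :
    ¬ 2 ^ i - 1 ∣ 3 ^ n := by
  intro hdvd
  obtain ⟨k, -, hk⟩ := (Nat.dvd_prime_pow Nat.prime_three).mp hdvd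
  exact Nat.two_pow_sub_one_ne_three_pow hi k hk

lemma Int.not_two_pow_sub_one_dvd_three_pow {i : ℕ} (hi : 3 ≤ i) (n : ℕ) :
    ¬ (2 : ℤ) ^ i - 1 ∣ 3 ^ n := by
  have hcast : ((2 ^ i - 1 : ℕ) : ℤ) = 2 ^ i - 1 := by
    rw [Nat.cast_sub Nat.one_le_two_pow]; push_cast; rfl
  rw [← hcast, show (3 : ℤ) ^ n = ((3 ^ n : ℕ) : ℤ) by push_cast; rfl, Int.natCast_dvd_natCast]
  exact Nat.not_two_pow_sub_one_dvd_three_pow hi n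

theorem stmt14 :
    ¬ ∃ i : ℕ, 3 ≤ i ∧ ∃ m : ℤ, m = ⌊((3 : ℚ) / 2) ^ i⌋ ∧
      (3 : ℤ) ^ i = (2 ^ i - 1) * (m + 1) := by
  rintro ⟨i, hi, m, -, heq⟩
  exact Int.not_two_pow_sub_one_dvd_three_pow hi i ⟨m + 1, heq⟩
end
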